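/- arXiv:2311.14644 — 3 statements merged into one kernel-verified Lean document; each statement's English description precedes it below -/
import Mathlib

section
/- Let {X_i} be i.i.d. Bernoulli random variables with P(X_0 = 1) = α and P(X_0 = 0) = 1 - α, where α ≥ 0.9. Then for every n ≥ 1, P(∑_{i=1}^n X_i ≤ n/2) ≤ 10(1 - α). -/
/-!
Chebyshev's inequality. The sum `S` of `n` independent Bernoulli(α) variables has mean `n α` and
variance `n α (1 - α)`, and `S ≤ n / 2` forces a deviation of at least `n (α - 1/2) ≥ 0.4 n`
below the mean, so the probability is at most `n α (1 - α) / (0.16 n²) ≤ 6.25 (1 - α)`.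
-/

open MeasureTheory ProbabilityTheory

section ZeroOne

variable {Ω : Type*} [MeasurableSpace Ω] {P : Measure Ω} {f : Ω → ℝ}

lemma ae_eq_zero_or_one_of_measure_add [IsProbabilityMeasure P] (hf : Measurable f)
    (h : P {ω | f ω = 0} + P {ω | f ω = 1} = 1) : ∀ᵐ ω ∂P, f ω = 0 ∨ f ω = 1 := by
  have hmeas : MeasurableSet ({ω | f ω = 0} ∪ {ω | f ω = 1}) :=
    (hf (measurableSet_singleton 0)).union (hf (measurableSet_singleton 1))
  have hdisj : Disjoint {ω | f ω = 0} {ω | f ω = 1} :=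
    Set.disjoint_left.mpr fun ω h0 h1 => zero_ne_one (h0.symm.trans h1)
  have hunion : P ({ω | f ω = 0} ∪ {ω | f ω = 1}) = 1 := by
    rwa [measure_union hdisj (hf (measurableSet_singleton 1))]
  have hcompl : P ({ω | f ω = 0} ∪ {ω | f ω = 1})ᶜ = 0 := by
    rw [measure_compl hmeas (measure_ne_top _ _), hunion, measure_univ, tsub_self]
  filter_upwards [measure_eq_zero_iff_ae_notMem.mp hcompl] with ω hω
  exact Set.notMem_compl_iff.mp hω

lemma ae_eq_indicator_of_ae_zero_or_one (h01 : ∀ᵐ ω ∂P, f ω = 0 ∨ f ω = 1) :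
    f =ᵐ[P] Set.indicator {ω | f ω = 1} (fun _ => (1 : ℝ)) := by
  filter_upwards [h01] with ω hω
  rcases hω with h | h
  · rw [Set.indicator_of_notMem (by simp [h]), h]
  · rw [Set.indicator_of_mem (by simpa using h), h]

lemma integral_eq_measureReal_of_ae_zero_or_one (hf : Measurable f)
    (h01 : ∀ᵐ ω ∂P, f ω = 0 ∨ f ω = 1) :
    ∫ ω, f ω ∂P = P.real {ω | f ω = 1} := by
  have hs : MeasurableSet {ω | f ω = 1} := hf (measurableSet_singleton 1)
  rw [integral_congr_ae (ae_eq_indicator_of_ae_zero_or_one h01),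
    integral_indicator_const _ hs, smul_eq_mul, mul_one]

lemma memLp_of_ae_zero_or_one [IsFiniteMeasure P] (hf : Measurable f)
    (h01 : ∀ᵐ ω ∂P, f ω = 0 ∨ f ω = 1) (p : ENNReal) : MemLp f p P := by
  refine memLp_of_bounded (a := 0) (b := 1) ?_ hf.aestronglyMeasurable p
  filter_upwards [h01] with ω hω
  rcases hω with h | h <;> simp [h]

lemma variance_eq_of_ae_zero_or_one [IsProbabilityMeasure P] (hf : Measurable f)
    (h01 : ∀ᵐ ω ∂P, f ω = 0 ∨ f ω = 1) :
    variance f P = P.real {ω | f ω = 1} * (1 - P.real {ω | f ω = 1}) := by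
  have hsq : f ^ 2 =ᵐ[P] f := by
    filter_upwards [h01] with ω hω
    rcases hω with h | h <;> simp [h]
  rw [variance_eq_sub (memLp_of_ae_zero_or_one hf h01 2), integral_congr_ae hsq,
    integral_eq_measureReal_of_ae_zero_or_one hf h01]
  ring

end ZeroOne

lemma measure_le_le_variance_div_sq {Ω : Type*} [MeasurableSpace Ω] {P : Measure Ω}
    [IsFiniteMeasure P] {S : Ω → ℝ} (hS : MemLp S 2 P) {t : ℝ} (ht : t < P[S]) :
    P {ω | S ω ≤ t} ≤ ENNReal.ofReal (variance S P / (P[S] - t) ^ 2) := by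
  refine le_trans (measure_mono fun ω hω => ?_) (meas_ge_le_variance_div_sq hS (sub_pos.mpr ht))
  simp only [Set.mem_ofPred_eq] at hω ⊢
  rw [abs_sub_comm]
  exact (sub_le_sub_left hω _).trans (le_abs_self _)

lemma chebyshev_bound_le_of_nine_tenths_le {α : ℝ} (hα : 0.9 ≤ α) (hα1 : α ≤ 1) {n : ℝ}
    (hn : 1 ≤ n) : n * (α * (1 - α)) / (n * α - n / 2) ^ 2 ≤ 10 * (1 - α) := by
  have hdev : 0.4 * n ≤ n * α - n / 2 := by nlinarith
  rw [div_le_iff₀ (by nlinarith)]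
  have hsq : 0.16 * n ^ 2 ≤ (n * α - n / 2) ^ 2 := by nlinarith
  have h1α : 0 ≤ 1 - α := by linarith
  calc n * (α * (1 - α)) ≤ n * (1 - α) := by
        gcongr; exact mul_le_of_le_one_left h1α hα1
    _ ≤ 10 * (1 - α) * (0.16 * n ^ 2) := by nlinarith [mul_nonneg h1α (sub_nonneg.mpr hn)]
    _ ≤ 10 * (1 - α) * (n * α - n / 2) ^ 2 := by gcongr

theorem stmt_0_general {Ω : Type*} [MeasurableSpace Ω] (P : Measure Ω)
    [IsProbabilityMeasure P] (α : ℝ) (hα : 0.9 ≤ α) (hα1 : α ≤ 1)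
    (X : ℕ → Ω → ℝ) (hmeas : ∀ i, Measurable (X i))
    (hindep : iIndepFun X P)
    (h1 : ∀ i, P {ω | X i ω = 1} = ENNReal.ofReal α)
    (h0 : ∀ i, P {ω | X i ω = 0} = ENNReal.ofReal (1 - α)) :
    ∀ n : ℕ, 1 ≤ n →
      P {ω | ∑ i ∈ Finset.Icc 1 n, X i ω ≤ (n : ℝ) / 2}
        ≤ ENNReal.ofReal (10 * (1 - α)) := by
  intro n hn
  have h01 : ∀ i, ∀ᵐ ω ∂P, X i ω = 0 ∨ X i ω = 1 := fun i =>
    ae_eq_zero_or_one_of_measure_add (hmeas i) (by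
      rw [h0, h1, ← ENNReal.ofReal_add (by linarith) (by linarith)]; simp)
  have hp : ∀ i, P.real {ω | X i ω = 1} = α := fun i => by
    rw [measureReal_def, h1, ENNReal.toReal_ofReal (by linarith)]
  have hL2 : ∀ i, MemLp (X i) 2 P := fun i => memLp_of_ae_zero_or_one (hmeas i) (h01 i) 2
  have hmean : P[∑ i ∈ Finset.Icc 1 n, X i] = n * α := by
    simp [integral_finsetSum _ fun i _ => (hL2 i).integrable one_le_two,
      integral_eq_measureReal_of_ae_zero_or_one (hmeas _) (h01 _), hp]
  have hvar : variance (∑ i ∈ Finset.Icc 1 n, X i) P = n * (α * (1 - α)) := by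
    simp [IndepFun.variance_sum (fun i _ => hL2 i) fun i _ j _ hij => hindep.indepFun hij,
      variance_eq_of_ae_zero_or_one (hmeas _) (h01 _), hp]
  have hn' : (1 : ℝ) ≤ n := by exact_mod_cast hn
  have hbound := measure_le_le_variance_div_sq (memLp_finsetSum' _ fun i _ => hL2 i)
    (t := n / 2) (by rw [hmean]; nlinarith)
  rw [hmean, hvar] at hbound
  simp only [Finset.sum_apply] at hbound
  exact hbound.trans (ENNReal.ofReal_le_ofReal (chebyshev_bound_le_of_nine_tenths_le hα hα1 hn'))

theorem stmt_0 {Ω : Type*} [MeasurableSpace Ω] (P : Measure Ω)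
    [IsProbabilityMeasure P] (α : ℝ) (hα : 0.9 ≤ α) (hα1 : α ≤ 1)
    (X : ℕ → Ω → ℝ) (hmeas : ∀ i, Measurable (X i))
    (hindep : iIndepFun X P)
    (hident : ∀ i, Measure.map (X i) P = Measure.map (X 0) P)
    (h1 : ∀ i, P {ω | X i ω = 1} = ENNReal.ofReal α)
    (h0 : ∀ i, P {ω | X i ω = 0} = ENNReal.ofReal (1 - α)) :
    ∀ n : ℕ, 1 ≤ n →
      P {ω | ∑ i ∈ Finset.Icc 1 n, X i ω ≤ (n : ℝ) / 2}
        ≤ ENNReal.ofReal (10 * (1 - α)) :=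
  stmt_0_general P α hα hα1 X hmeas hindep h1 h0
end

section
/- Let L = 10^6 and define φ(r,h,k) = -(r-1)k - h/((k+1)(k+2)) - 12r + 18 + r·log_L(h) + r·log_L(k+1) for real r ∈ [2, L], integer h ≥ 1, and integer k ≥ 0. Then φ(r,h,k) < -r for all such r, h, k. -/
theorem stmt_5 (L : ℝ) (hL : L = 10 ^ 6) :
    ∀ (r : ℝ) (h k : ℕ), 2 ≤ r → r ≤ L → 1 ≤ h →
      -(r - 1) * k - (h : ℝ) / ((k + 1) * (k + 2)) - 12 * r + 18
        + r * Real.logb L h + r * Real.logb L (k + 1) < -r := by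
  intro r h k hr hrL hh
  have hL0 : (0:ℝ) < L := by rw [hL]; norm_num
  have h10 : (2:ℝ) ≤ Real.log 10 := by
    rw [Real.le_log_iff_exp_le (by norm_num)]
    have he : Real.exp 1 < 2.7182818286 := Real.exp_one_lt_d9
    have h2 : Real.exp 2 = Real.exp 1 * Real.exp 1 := by
      rw [← Real.exp_add]; norm_num
    nlinarith [Real.exp_pos 1]
  have hlogL : (12:ℝ) ≤ Real.log L := by
    rw [hL, show ((10:ℝ)^6) = 10^(6:ℕ) by norm_num, Real.log_pow]
    push_cast; linarith
  set ℓ := Real.log L with hℓ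
  have hℓ0 : (0:ℝ) < ℓ := by linarith
  set K := (k:ℝ) with hKdef
  have hK0 : (0:ℝ) ≤ K := Nat.cast_nonneg k
  have hr0 : (0:ℝ) < r := by linarith
  have hh1 : (1:ℝ) ≤ (h:ℝ) := by exact_mod_cast hh
  have hP0 : (0:ℝ) < (K+1)*(K+2) := by nlinarith
  -- logb in terms of log
  have hlogb1 : Real.logb L (h:ℝ) = Real.log (h:ℝ) / ℓ := rfl
  have hlogb2 : Real.logb L (K+1) = Real.log (K+1) / ℓ := rfl
  -- bound for log (K+1) and log (K+2)
  have hlk1 : Real.log (K+1) ≤ K := by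
    have := Real.log_le_sub_one_of_pos (show (0:ℝ) < K+1 by linarith)
    linarith
  have hlk2 : Real.log (K+2) ≤ K+1 := by
    have := Real.log_le_sub_one_of_pos (show (0:ℝ) < K+2 by linarith)
    linarith
  have hlr : Real.log r ≤ ℓ := Real.log_le_log (by linarith) hrL
  have hlℓ : (0:ℝ) ≤ Real.log ℓ := Real.log_nonneg (by linarith)
  -- the tangent-line trick with c = (K+1)(K+2)r/ℓ
  set c : ℝ := (K+1)*(K+2)*r/ℓ with hcdef
  have hc0 : (0:ℝ) < c := by positivity
  have hkey : Real.log (h:ℝ) ≤ (h:ℝ)/c + Real.log c - 1 := by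
    have h1 : Real.log ((h:ℝ)/c) ≤ (h:ℝ)/c - 1 :=
      Real.log_le_sub_one_of_pos (div_pos (by linarith) hc0)
    have h2 : Real.log ((h:ℝ)/c) = Real.log (h:ℝ) - Real.log c :=
      Real.log_div (by linarith) (ne_of_gt hc0)
    linarith
  have hlogc : Real.log c = Real.log (K+1) + Real.log (K+2) + Real.log r - Real.log ℓ := by
    rw [hcdef, Real.log_div (by positivity) (ne_of_gt hℓ0),
      Real.log_mul (by positivity) (ne_of_gt hr0),
      Real.log_mul (by positivity) (by positivity)]
  have hlogc' : Real.log c - 1 ≤ 2*K + ℓ := by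
    rw [hlogc]; linarith
  -- bound A = r * log h / ℓ
  have hdivc : r / ℓ * ((h:ℝ)/c) = (h:ℝ)/((K+1)*(K+2)) := by
    rw [hcdef]; field_simp
  have hA : r * Real.log (h:ℝ) / ℓ ≤ (h:ℝ)/((K+1)*(K+2)) + r/ℓ * (2*K + ℓ) := by
    have h1 : r * Real.log (h:ℝ) / ℓ = r/ℓ * Real.log (h:ℝ) := by ring
    have h2 : r/ℓ * Real.log (h:ℝ) ≤ r/ℓ * ((h:ℝ)/c + Real.log c - 1) := by
      apply mul_le_mul_of_nonneg_left _ (by positivity)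
      linarith
    have h3 : r/ℓ * ((h:ℝ)/c + Real.log c - 1)
        ≤ r/ℓ * ((h:ℝ)/c) + r/ℓ * (2*K + ℓ) := by
      have := mul_le_mul_of_nonneg_left hlogc' (show (0:ℝ) ≤ r/ℓ by positivity)
      nlinarith
    rw [h1, ← hdivc]; linarith
  have hB : r * Real.log (K+1) / ℓ ≤ r * K / ℓ := by
    gcongr
  -- combine: A + B ≤ h/P + 3rK/ℓ + r
  have hsum : r * Real.log (h:ℝ) / ℓ + r * Real.log (K+1) / ℓ
      ≤ (h:ℝ)/((K+1)*(K+2)) + 3*r*K/ℓ + r := by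
    have : r/ℓ * (2*K + ℓ) = 2*r*K/ℓ + r := by field_simp
    have h3 : r * K / ℓ + 2*r*K/ℓ = 3*r*K/ℓ := by ring
    linarith [hA, hB]
  have hfrac : 3*r*K/ℓ ≤ r*K/4 := by
    have h1 : 3*r*K/ℓ ≤ 3*r*K/12 := by gcongr
    have h2 : 3*r*K/12 = r*K/4 := by ring
    linarith
  rw [hlogb1, hlogb2]
  have hPc : ((k:ℝ)+1)*((k:ℝ)+2) = (K+1)*(K+2) := by rw [hKdef]
  have goal2 : -(r - 1) * K - (h : ℝ) / ((K + 1) * (K + 2)) - 12 * r + 18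
      + r * Real.log (h:ℝ) / ℓ + r * Real.log (K + 1) / ℓ < -r := by
    have hprod : 0 ≤ K * (r - 2) := mul_nonneg hK0 (by linarith)
    linarith [hsum, hfrac, hprod]
  calc -(r - 1) * K - (h : ℝ) / ((K + 1) * (K + 2)) - 12 * r + 18
        + r * (Real.log (h:ℝ) / ℓ) + r * (Real.log (K + 1) / ℓ)
      = -(r - 1) * K - (h : ℝ) / ((K + 1) * (K + 2)) - 12 * r + 18
        + r * Real.log (h:ℝ) / ℓ + r * Real.log (K + 1) / ℓ := by ring
    _ < -r := goal2
end

section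
/- Let (ξ_j)_{j ∈ ℤ} be i.i.d. nonnegative random variables such that for every μ ∈ (0,1), limsup_{t→∞} μ^{-t} P(ξ_0 > t) = ∞. Fix δ > 0 and a > 0, and define B_n = { max_{1 ≤ i ≤ e^{δn}} ξ_i > an }. Then limsup_{n→∞} P(B_n) = 1. -/
/-!
Put `r = δ / (2a)`. By the tail assumption with `μ = e^{-r}` there are arbitrarily large
integers `t` with `P(ξ₀ > t) ≥ e^{-rt}`; for `n = ⌊t/a⌋` this gives `P(ξ₀ > an) ≥ e^{-rt}`
while `e^{δn} ≥ e^{2rt - δ}`. Hence, along these `n`, the expected number `N p` of indices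
`i ≤ e^{δn}` with `ξ_i > an` is at least about `e^{rt - δ} → ∞`, and by independence
`P(B_n) = 1 - (1 - p)^N ≥ 1 - e^{-Np} → 1`.
-/

open MeasureTheory ProbabilityTheory
open scoped ENNReal

open Filter Real Finset

theorem ENNReal.frequently_lt_of_limsup_div_eq_top {α : Type*} {l : Filter α} {f g : α → ℝ≥0∞}
    (h : limsup (fun x => f x / g x) l = ∞) : ∃ᶠ x in l, g x < f x := by
  have h1 : ∃ᶠ x in l, 1 < f x / g x :=
    frequently_lt_of_lt_limsup (by isBoundedDefault) (h ▸ ENNReal.one_lt_top)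
  refine h1.mono fun x hx => lt_of_not_ge fun hfg => hx.not_ge ?_
  exact ENNReal.div_le_of_le_mul (by rwa [one_mul])

theorem ENNReal.limsup_eq_one_of_frequently {α : Type*} {l : Filter α} {u : α → ℝ≥0∞}
    (hu : ∀ x, u x ≤ 1) (h : ∀ ε : ℝ, 0 < ε → ∃ᶠ x in l, 1 - ε ≤ (u x).toReal) :
    limsup u l = 1 := by
  refine le_antisymm (limsup_le_of_le (by isBoundedDefault) (.of_forall hu)) ?_
  refine le_of_forall_lt fun c hc => ?_
  have hc' : c.toReal < 1 := by
    simpa using (ENNReal.toReal_lt_toReal hc.ne_top ENNReal.one_ne_top).2 hc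
  obtain ⟨c', hcc', hc'1⟩ := exists_between hc'
  refine lt_of_lt_of_le ?_ (le_limsup_of_frequently_le ((h (1 - c') (by linarith)).mono
    fun x hx => (ENNReal.ofReal_le_iff_le_toReal (ne_top_of_le_ne_top ENNReal.one_ne_top (hu x))).2
      (by linarith : c' ≤ (u x).toReal)) (by isBoundedDefault))
  exact (ENNReal.lt_ofReal_iff_toReal_lt hc.ne_top).2 hcc'

theorem exists_int_one_le_le_iff (E : ℝ) (p : ℤ → Prop) :
    (∃ i : ℤ, 1 ≤ i ∧ (i : ℝ) ≤ E ∧ p i) ↔ ∃ i ∈ Icc 1 ⌊E⌋, p i := by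
  simp only [mem_Icc, Int.le_floor, and_assoc]

theorem sub_one_le_card_Icc_one_floor (E : ℝ) : E - 1 ≤ #(Icc 1 ⌊E⌋) := by
  rw [Int.card_Icc, add_sub_cancel_right]
  calc E - 1 ≤ ⌊E⌋ := (Int.sub_one_lt_floor E).le
    _ ≤ ((⌊E⌋.toNat : ℤ) : ℝ) := by exact_mod_cast Int.self_le_toNat _
    _ = _ := Int.cast_natCast _

section IID

variable {Ω ι : Type*} [MeasurableSpace Ω] {P : Measure Ω}
  {ξ : ι → Ω → ℝ} {i₀ : ι}

theorem ProbabilityTheory.iIndepFun.measureReal_forall_le_eq_pow (hmeas : ∀ i, Measurable (ξ i))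
    (hindep : iIndepFun ξ P) (hident : ∀ i, P.map (ξ i) = P.map (ξ i₀)) (s : Finset ι) (x : ℝ) :
    P.real {ω | ∀ i ∈ s, ξ i ω ≤ x} = P.real {ω | ξ i₀ ω ≤ x} ^ #s := by
  have hfac (i : ι) : P (ξ i ⁻¹' Set.Iic x) = P (ξ i₀ ⁻¹' Set.Iic x) := by
    rw [← Measure.map_apply (hmeas i) measurableSet_Iic, hident i,
      Measure.map_apply (hmeas i₀) measurableSet_Iic]
  have hinter := hindep.measure_inter_preimage_eq_mul s (sets := fun _ => Set.Iic x)
    fun _ _ => measurableSet_Iic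
  rw [prod_congr rfl fun i _ => hfac i, prod_const] at hinter
  have hset : {ω | ∀ i ∈ s, ξ i ω ≤ x} = ⋂ i ∈ s, ξ i ⁻¹' Set.Iic x := by ext; simp
  have hset₀ : {ω | ξ i₀ ω ≤ x} = ξ i₀ ⁻¹' Set.Iic x := rfl
  rw [measureReal_def, measureReal_def, hset, hset₀, hinter, ENNReal.toReal_pow]

theorem ProbabilityTheory.iIndepFun.one_sub_exp_le_measureReal_exists_lt [IsProbabilityMeasure P]
    (hmeas : ∀ i, Measurable (ξ i))
    (hindep : iIndepFun ξ P) (hident : ∀ i, P.map (ξ i) = P.map (ξ i₀)) (s : Finset ι) (x : ℝ) :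
    1 - exp (-(#s * P.real {ω | x < ξ i₀ ω})) ≤ P.real {ω | ∃ i ∈ s, x < ξ i ω} := by
  have hcompl (j : ι) : {ω | x < ξ j ω} = {ω | ξ j ω ≤ x}ᶜ := by ext; simp
  have hmeas_le : MeasurableSet {ω | ∀ i ∈ s, ξ i ω ≤ x} := by
    simp only [Set.ofPred_forall]
    exact .biInter s.countable_toSet fun i _ => measurableSet_le (hmeas i) measurable_const
  have hexists : {ω | ∃ i ∈ s, x < ξ i ω} = {ω | ∀ i ∈ s, ξ i ω ≤ x}ᶜ := by ext; simp
  rw [hexists, probReal_compl_eq_one_sub hmeas_le,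
    hindep.measureReal_forall_le_eq_pow hmeas hident, hcompl,
    probReal_compl_eq_one_sub (measurableSet_le (hmeas i₀) measurable_const)]
  gcongr
  calc P.real {ω | ξ i₀ ω ≤ x} ^ #s = (1 - (1 - P.real {ω | ξ i₀ ω ≤ x})) ^ #s := by
        rw [sub_sub_cancel]
    _ ≤ exp (-(1 - P.real {ω | ξ i₀ ω ≤ x})) ^ #s := by
        gcongr
        · simp [measureReal_nonneg]
        · exact one_sub_le_exp_neg _
    _ = _ := by rw [← exp_nat_mul, mul_neg]

end IID

theorem frequently_le_exp_sub_one_mul {F : ℝ → ℝ} (hF : Antitone F)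
    (htail : ∀ μ : ℝ, 0 < μ → μ < 1 → ∃ᶠ t : ℕ in atTop, μ ^ t ≤ F t)
    {δ a : ℝ} (hδ : 0 < δ) (ha : 0 < a) (K : ℝ) :
    ∃ᶠ n : ℕ in atTop, K ≤ (exp (δ * n) - 1) * F (a * n) := by
  set r := δ / (2 * a)
  have hr : 0 < r := by positivity
  have hfreq : ∃ᶠ t : ℕ in atTop, exp (-r) ^ t ≤ F t ∧ (K + δ) / r ≤ t :=
    (htail _ (exp_pos _) (exp_lt_one_iff.2 (neg_lt_zero.2 hr))).and_eventually
      (tendsto_natCast_atTop_atTop.eventually_ge_atTop _)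
  have hfloor : Tendsto (fun t : ℕ => ⌊(t : ℝ) / a⌋₊) atTop atTop :=
    tendsto_nat_floor_atTop.comp (tendsto_natCast_atTop_atTop.atTop_div_const ha)
  refine hfloor.frequently_map _ (fun t ⟨hFt, ht⟩ => ?_) hfreq
  set n := ⌊(t : ℝ) / a⌋₊
  have han : a * n ≤ t := (le_div_iff₀' ha).1 (Nat.floor_le (by positivity))
  have hδn : 2 * r * t - δ ≤ δ * n := by
    have : 2 * r * t - δ = δ * ((t : ℝ) / a - 1) := by simp only [r]; field_simp
    rw [this]
    exact mul_le_mul_of_nonneg_left (Nat.sub_one_lt_floor _).le hδ.le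
  have hFn : exp (-(r * t)) ≤ F (a * n) := by
    calc exp (-(r * t)) = exp (-r) ^ t := by rw [← exp_nat_mul]; ring_nf
      _ ≤ F (a * n) := hFt.trans (hF han)
  have hKrt : K ≤ r * t - δ := by linarith [(div_le_iff₀ hr).1 ht]
  calc K ≤ exp (r * t - δ) - 1 := by linarith [add_one_le_exp (r * t - δ)]
    _ ≤ exp (r * t - δ) - exp (-(r * t)) := by
        gcongr; exact exp_le_one_iff.2 (by simp only [neg_nonpos]; positivity)
    _ = (exp (2 * r * t - δ) - 1) * exp (-(r * t)) := by
        rw [sub_mul, ← exp_add, one_mul]; ring_nf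
    _ ≤ (exp (δ * n) - 1) * F (a * n) := by
        gcongr
        exact sub_nonneg.2 (one_le_exp (by positivity))

theorem stmt_12_general {Ω : Type*} [MeasurableSpace Ω] (P : Measure Ω)
    [IsProbabilityMeasure P] (ξ : ℤ → Ω → ℝ) (hmeas : ∀ i, Measurable (ξ i))
    (hindep : iIndepFun ξ P)
    (hident : ∀ i, Measure.map (ξ i) P = Measure.map (ξ 0) P)
    (htail : ∀ μ : ℝ, 0 < μ → μ < 1 →
      Filter.limsup
        (fun t : ℕ => P {ω | (t : ℝ) < ξ 0 ω} / ENNReal.ofReal (μ ^ t))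
        Filter.atTop = ∞)
    (δ a : ℝ) (hδ : 0 < δ) (ha : 0 < a) :
    Filter.limsup
      (fun n : ℕ =>
        P {ω | ∃ i : ℤ, 1 ≤ i ∧ (i : ℝ) ≤ Real.exp (δ * n) ∧ a * n < ξ i ω})
      Filter.atTop = 1 := by
  have hanti : Antitone fun x : ℝ => P.real {ω | x < ξ 0 ω} :=
    fun x y hxy => measureReal_mono fun ω (hω : y < ξ 0 ω) => hxy.trans_lt hω
  have htail' (μ : ℝ) (hμ₀ : 0 < μ) (hμ₁ : μ < 1) :
      ∃ᶠ t : ℕ in atTop, μ ^ t ≤ P.real {ω | (t : ℝ) < ξ 0 ω} :=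
    (ENNReal.frequently_lt_of_limsup_div_eq_top (htail μ hμ₀ hμ₁)).mono fun t ht =>
      ((ENNReal.ofReal_lt_iff_lt_toReal (by positivity) (measure_ne_top _ _)).1 ht).le
  refine ENNReal.limsup_eq_one_of_frequently (fun n => prob_le_one) fun ε hε => ?_
  refine (frequently_le_exp_sub_one_mul hanti htail' hδ ha (-log ε)).mono fun n hn => ?_
  simp_rw [exists_int_one_le_le_iff]
  calc 1 - ε = 1 - exp (-(-log ε)) := by rw [neg_neg, exp_log hε]
    _ ≤ 1 - exp (-(#(Icc 1 ⌊exp (δ * n)⌋) * P.real {ω | a * n < ξ 0 ω})) := by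
        gcongr
        exact hn.trans (mul_le_mul_of_nonneg_right (sub_one_le_card_Icc_one_floor _)
          measureReal_nonneg)
    _ ≤ _ := hindep.one_sub_exp_le_measureReal_exists_lt hmeas hident _ _

theorem stmt_12 {Ω : Type*} [MeasurableSpace Ω] (P : Measure Ω)
    [IsProbabilityMeasure P] (ξ : ℤ → Ω → ℝ) (hmeas : ∀ i, Measurable (ξ i))
    (hnonneg : ∀ i ω, 0 ≤ ξ i ω)
    (hindep : iIndepFun ξ P)
    (hident : ∀ i, Measure.map (ξ i) P = Measure.map (ξ 0) P)
    (htail : ∀ μ : ℝ, 0 < μ → μ < 1 →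
      Filter.limsup
        (fun t : ℕ => P {ω | (t : ℝ) < ξ 0 ω} / ENNReal.ofReal (μ ^ t))
        Filter.atTop = ∞)
    (δ a : ℝ) (hδ : 0 < δ) (ha : 0 < a) :
    Filter.limsup
      (fun n : ℕ =>
        P {ω | ∃ i : ℤ, 1 ≤ i ∧ (i : ℝ) ≤ Real.exp (δ * n) ∧ a * n < ξ i ω})
      Filter.atTop = 1 :=
  stmt_12_general P ξ hmeas hindep hident htail δ a hδ ha
end
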